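/- Let G be a finite simple graph on n vertices and let G̃ be the graph obtained from G by adding n new isolated vertices. Then G̃ is a Freckle Graph, and I^O(G̃) = n + i(G), where i(G) is the minimum size of an inclusion-maximal independent set of G. (This is the mathematical core of the reduction showing that deciding I^O(G) ≤ q is NP-hard.) -/

import Mathlib

namespace OnlinePaper

/-- A deterministic online algorithm in the vertex-arrival model: given the number `n` of
previously revealed vertices and the Boolean adjacency matrix on the `n + 1` revealed
vertices (the newly revealed vertex has index `Fin.last n`), decide whether to accept the
newly revealed vertex.  The algorithm sees only this order-canonical information. -/
def OnlineAlg : Type := (n : ℕ) → (Fin (n + 1) → Fin (n + 1) → Bool) → Bool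

/-- The complement algorithm `ĀLG`: it simulates `A` and accepts exactly the requests
that `A` rejects. -/
def coAlg (A : OnlineAlg) : OnlineAlg := fun n M => !(A n M)

variable {V : Type}

/-- The Boolean adjacency matrix on the first `i + 1` revealed vertices, when the graph `G`
is presented in the order `φ`. -/
noncomputable def revealedMatrix [Fintype V] (G : SimpleGraph V)
    (φ : Fin (Fintype.card V) ≃ V) (i : Fin (Fintype.card V)) :
    Fin (i.val + 1) → Fin (i.val + 1) → Bool :=
  fun a b =>
    @decide (G.Adj (φ ⟨a.val, by have := a.isLt; have := i.isLt; omega⟩)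
        (φ ⟨b.val, by have := b.isLt; have := i.isLt; omega⟩)) (Classical.propDecidable _)

/-- Whether the algorithm `A` accepts the vertex revealed at step `i` when the graph `G` is
presented in the order `φ`. -/
noncomputable def accepts [Fintype V] (A : OnlineAlg) (G : SimpleGraph V)
    (φ : Fin (Fintype.card V) ≃ V) (i : Fin (Fintype.card V)) : Bool :=
  A i.val (revealedMatrix G φ i)

/-- The set of vertices accepted by `A` when `G` is presented in the order `φ`. -/
noncomputable def acceptedSet [Fintype V] (A : OnlineAlg) (G : SimpleGraph V)
    (φ : Fin (Fintype.card V) ≃ V) : Finset V :=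
  Finset.univ.filter (fun v => accepts A G φ (φ.symm v) = true)

/-- `s` is an independent set of `G`. -/
def IsIndep (G : SimpleGraph V) (s : Finset V) : Prop := ∀ a ∈ s, ∀ b ∈ s, ¬ G.Adj a b

/-- `s` is a vertex cover of `G`. -/
def IsVC (G : SimpleGraph V) (s : Finset V) : Prop := ∀ a b : V, G.Adj a b → a ∈ s ∨ b ∈ s

/-- `s` is a dominating set of `G`. -/
def IsDom (G : SimpleGraph V) (s : Finset V) : Prop := ∀ v : V, v ∈ s ∨ ∃ u ∈ s, G.Adj u v

/-- `s` is an inclusion-maximal independent set of `G`. -/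
def IsMaxIndep [DecidableEq V] (G : SimpleGraph V) (s : Finset V) : Prop :=
  IsIndep G s ∧ ∀ v ∉ s, ¬ IsIndep G (insert v s)

/-- For maximization problems: the worst-case (minimum over orderings) number of requests
accepted by `A` on `G`. -/
noncomputable def minScore [Fintype V] (A : OnlineAlg) (G : SimpleGraph V) : ℕ :=
  sInf {m | ∃ φ : Fin (Fintype.card V) ≃ V, (acceptedSet A G φ).card = m}

/-- For minimization problems: the worst-case (maximum over orderings) number of requests
accepted by `A` on `G`. -/
noncomputable def maxScore [Fintype V] (A : OnlineAlg) (G : SimpleGraph V) : ℕ :=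
  sSup {m | ∃ φ : Fin (Fintype.card V) ≃ V, (acceptedSet A G φ).card = m}

/-- The online independence number `I^O(G)`: the largest `m` such that some online
algorithm accepts, on every ordering, an independent set of size at least `m`. -/
noncomputable def onlineIndepNum [Fintype V] (G : SimpleGraph V) : ℕ :=
  sSup {m | ∃ A : OnlineAlg, ∀ φ : Fin (Fintype.card V) ≃ V,
      IsIndep G (acceptedSet A G φ) ∧ m ≤ (acceptedSet A G φ).card}

/-- The online vertex cover number `V^O(G)`: the smallest `m` such that some online
algorithm accepts, on every ordering, a vertex cover of size at most `m`. -/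
noncomputable def onlineVCNum [Fintype V] (G : SimpleGraph V) : ℕ :=
  sInf {m | ∃ A : OnlineAlg, ∀ φ : Fin (Fintype.card V) ≃ V,
      IsVC G (acceptedSet A G φ) ∧ (acceptedSet A G φ).card ≤ m}

/-- The online domination number `D^O(G)`: the smallest `m` such that some online
algorithm accepts, on every ordering, a dominating set of size at most `m`. -/
noncomputable def onlineDomNum [Fintype V] (G : SimpleGraph V) : ℕ :=
  sInf {m | ∃ A : OnlineAlg, ∀ φ : Fin (Fintype.card V) ≃ V,
      IsDom G (acceptedSet A G φ) ∧ (acceptedSet A G φ).card ≤ m}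

/-- The greedy independent set decision: accept the newly revealed vertex iff none of its
previously revealed neighbors has been accepted (by the same greedy rule). -/
def gisAux : (n : ℕ) → (Fin (n + 1) → Fin (n + 1) → Bool) → Bool
  | n, M =>
    decide (∀ j : Fin n,
      gisAux j.val (fun a b => M (Fin.castLE (Nat.succ_le_succ j.isLt.le) a)
        (Fin.castLE (Nat.succ_le_succ j.isLt.le) b)) = true →
      M j.castSucc (Fin.last n) = false)
termination_by n => n
decreasing_by all_goals exact Fin.isLt _

/-- `GIS`, the greedy algorithm for Online Independent Set. -/
def gisAlg : OnlineAlg := fun n M => gisAux n M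

/-- `GDS`, the greedy algorithm for Online Dominating Set (the same algorithm as `GIS`). -/
def gdsAlg : OnlineAlg := gisAlg

/-- The greedy vertex cover decision: accept the newly revealed vertex iff it has a
previously revealed neighbor that was rejected (by the same greedy rule). -/
def gvcAux : (n : ℕ) → (Fin (n + 1) → Fin (n + 1) → Bool) → Bool
  | n, M =>
    decide (∃ j : Fin n,
      gvcAux j.val (fun a b => M (Fin.castLE (Nat.succ_le_succ j.isLt.le) a)
        (Fin.castLE (Nat.succ_le_succ j.isLt.le) b)) = false ∧
      M j.castSucc (Fin.last n) = true)
termination_by n => n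
decreasing_by all_goals exact Fin.isLt _

/-- `GVC`, the greedy algorithm for Online Vertex Cover. -/
def gvcAlg : OnlineAlg := fun n M => gvcAux n M

/-- `IS-STAR`: rejects the first vertex; rejects the second vertex if it is adjacent to the
first; rejects any later vertex having more than one previously revealed neighbor; accepts
every other vertex. -/
def isStarAlg : OnlineAlg := fun n M =>
  let c := (Finset.univ.filter (fun j : Fin n => M j.castSucc (Fin.last n) = true)).card
  if n = 0 then false
  else if n = 1 then decide (c = 0)
  else decide (c ≤ 1)

/-- `Almost-GIS`: identical to `GIS` except that it additionally rejects any revealed vertex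
having at least two previously revealed neighbors. -/
def almostGisAux : (n : ℕ) → (Fin (n + 1) → Fin (n + 1) → Bool) → Bool
  | n, M =>
    (decide (∀ j : Fin n,
      almostGisAux j.val (fun a b => M (Fin.castLE (Nat.succ_le_succ j.isLt.le) a)
        (Fin.castLE (Nat.succ_le_succ j.isLt.le) b)) = true →
      M j.castSucc (Fin.last n) = false)) &&
    decide ((Finset.univ.filter (fun j : Fin n => M j.castSucc (Fin.last n) = true)).card ≤ 1)
termination_by n => n
decreasing_by all_goals exact Fin.isLt _

/-- `Almost-GIS` as an online algorithm. -/
def almostGisAlg : OnlineAlg := fun n M => almostGisAux n M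

/-- The star graph `S_n`: a center `0` adjacent to `n` further vertices, and no other edges. -/
def starGraph (n : ℕ) : SimpleGraph (Fin (n + 1)) where
  Adj a b := a ≠ b ∧ (a = 0 ∨ b = 0)
  symm := ⟨fun _ _ h => ⟨h.1.symm, h.2.symm⟩⟩
  loopless := ⟨fun _ h => h.1 rfl⟩

/-- `v` is an isolated vertex of `G`. -/
def IsIsolated (G : SimpleGraph V) (v : V) : Prop := ∀ u : V, ¬ G.Adj v u

/-- `k(G)`: the number of isolated vertices of `G`. -/
noncomputable def numIsolated [Fintype V] (G : SimpleGraph V) : ℕ :=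
  Finset.card (@Finset.filter V (fun v => IsIsolated G v) (Classical.decPred _) Finset.univ)

/-- `G'`: the subgraph of `G` induced by the non-isolated vertices. -/
def inducedNonIsolated (G : SimpleGraph V) : SimpleGraph {v : V // ¬ IsIsolated G v} :=
  SimpleGraph.comap Subtype.val G

noncomputable instance {α : Type} [Fintype α] {p : α → Prop} : Fintype {v : α // p v} :=
  Fintype.ofFinite _

/-- The independent domination number: the minimum size of an inclusion-maximal independent
set of `G`. -/
noncomputable def indepDomNum [DecidableEq V] (G : SimpleGraph V) : ℕ :=
  sInf {m | ∃ s : Finset V, IsMaxIndep G s ∧ s.card = m}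

/-- The independence number `α(G)`: the maximum size of an independent set of `G`. -/
noncomputable def indepNum (G : SimpleGraph V) : ℕ :=
  sSup {m | ∃ s : Finset V, IsIndep G s ∧ s.card = m}

/-- `G` is a Freckle Graph: `k(G) + s(G') ≥ I^O(G')`. -/
noncomputable def IsFreckle [Fintype V] [DecidableEq V] (G : SimpleGraph V) : Prop :=
  onlineIndepNum (inducedNonIsolated G) ≤ numIsolated G + indepDomNum (inducedNonIsolated G)


/-- The graph `G̃` obtained from `G` by adding `k` new isolated vertices. -/
def addIsolated (G : SimpleGraph V) (k : ℕ) : SimpleGraph (V ⊕ Fin k) where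
  Adj a b := ∃ u v : V, G.Adj u v ∧ a = Sum.inl u ∧ b = Sum.inl v
  symm := by
    constructor
    rintro a b ⟨u, v, h, ha, hb⟩
    exact ⟨v, u, h.symm, hb, ha⟩
  loopless := by
    constructor
    rintro a ⟨u, v, h, rfl, hb⟩
    simp only [Sum.inl.injEq] at hb
    subst hb
    exact G.loopless.irrefl u h

/-!
While the revealed vertices form an independent set the algorithm sees no edge, so its
decisions depend only on the position.  The adversary first presents the `k` added isolated
vertices together with a smallest maximal independent set `s` of `G`.  If the algorithm accepts
at least `|s|` of these `k + |s|` positions, the adversary puts `s` on accepted positions; every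
other vertex of `G` is then adjacent to an accepted one and must be rejected, so at most
`k + |s|` vertices are accepted.  Otherwise fewer than `|s|` of them are accepted and only
`n - |s|` vertices come later.  With `k = n` both bounds are at most `n + i(G)`, which greedy
attains: every maximal independent set of `G̃` consists of all isolated vertices and a maximal
independent set of `G`.  The Freckle property is cheap: `G̃'` has at most `n` vertices while `G̃`
has at least `n` isolated ones.
-/

open Finset

section MaxIndep

variable [DecidableEq V] {G : SimpleGraph V} {s : Finset V}

theorem IsMaxIndep.exists_adj (hs : IsMaxIndep G s) {v : V} (hv : v ∉ s) :
    ∃ u ∈ s, G.Adj u v := by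
  have h := hs.2 v hv
  simp only [IsIndep, not_forall, not_not] at h
  obtain ⟨a, ha, b, hb, hab⟩ := h
  rcases mem_insert.mp ha with rfl | has
  · rcases mem_insert.mp hb with rfl | hbs
    · exact absurd hab (G.loopless.irrefl _)
    · exact ⟨b, hbs, hab.symm⟩
  · rcases mem_insert.mp hb with rfl | hbs
    · exact ⟨a, has, hab⟩
    · exact absurd hab (hs.1 a has b hbs)

theorem IsMaxIndep.mem_of_isIsolated (hs : IsMaxIndep G s) {v : V} (hv : IsIsolated G v) :
    v ∈ s := by
  by_contra hvs
  obtain ⟨u, -, huv⟩ := hs.exists_adj hvs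
  exact hv u huv.symm

theorem exists_isMaxIndep [Fintype V] (G : SimpleGraph V) : ∃ s, IsMaxIndep G s := by
  classical
  obtain ⟨s, hs, hmax⟩ := exists_max_image {t : Finset V | IsIndep G t} card
    ⟨∅, mem_filter.mpr ⟨mem_univ _, by simp [IsIndep]⟩⟩
  refine ⟨s, (mem_filter.mp hs).2, fun v hv hind => ?_⟩
  have := hmax (insert v s) (by simpa using hind)
  rw [card_insert_of_notMem hv] at this
  omega

theorem exists_isMaxIndep_card_eq_indepDomNum [Fintype V] (G : SimpleGraph V) :
    ∃ s, IsMaxIndep G s ∧ #s = indepDomNum G :=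
  Nat.sInf_mem (s := {m | ∃ s, IsMaxIndep G s ∧ #s = m})
    (let ⟨s, hs⟩ := exists_isMaxIndep G; ⟨#s, s, hs, rfl⟩)

theorem indepDomNum_le_card (hs : IsMaxIndep G s) : indepDomNum G ≤ #s :=
  Nat.sInf_le ⟨s, hs, rfl⟩

end MaxIndep

section Online

variable [Fintype V] (A : OnlineAlg) (H : SimpleGraph V) (φ : Fin (Fintype.card V) ≃ V)

theorem mem_acceptedSet {v : V} : v ∈ acceptedSet A H φ ↔ accepts A H φ (φ.symm v) = true := by
  simp [acceptedSet]

theorem accepts_eq_of_isIndep_prefix (i : Fin (Fintype.card V))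
    (h : ∀ a b, a ≤ i → b ≤ i → ¬ H.Adj (φ a) (φ b)) :
    accepts A H φ i = A i (fun _ _ => false) := by
  unfold accepts
  congr 1
  funext a b
  simp only [revealedMatrix, decide_eq_false_iff_not]
  exact h _ _ (Fin.le_def.mpr (Nat.lt_succ_iff.mp a.isLt))
    (Fin.le_def.mpr (Nat.lt_succ_iff.mp b.isLt))

theorem accepts_gisAlg_iff (i : Fin (Fintype.card V)) :
    accepts gisAlg H φ i = true ↔
      ∀ j < i, accepts gisAlg H φ j = true → ¬ H.Adj (φ j) (φ i) := by
  change gisAux i (revealedMatrix H φ i) = true ↔ _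
  rw [gisAux, decide_eq_true_eq]
  -- restricting the revealed matrix at step `i` to its first `j + 1` rows is the one at step `j`
  constructor
  · intro h j hj hacc
    simpa [revealedMatrix] using h ⟨j, hj⟩ hacc
  · intro h j hacc
    simpa [revealedMatrix] using h ⟨j, j.isLt.trans i.isLt⟩ j.isLt hacc

theorem isMaxIndep_acceptedSet_gisAlg [DecidableEq V] :
    IsMaxIndep H (acceptedSet gisAlg H φ) := by
  constructor
  · intro a ha b hb hab
    rw [mem_acceptedSet] at ha hb
    rcases lt_trichotomy (φ.symm a) (φ.symm b) with h | h | h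
    · exact (accepts_gisAlg_iff H φ _).mp hb _ h ha (by simpa using hab)
    · exact H.ne_of_adj hab (φ.symm.injective h)
    · exact (accepts_gisAlg_iff H φ _).mp ha _ h hb (by simpa using hab.symm)
  · intro v hv hind
    rw [mem_acceptedSet, accepts_gisAlg_iff] at hv
    push Not at hv
    obtain ⟨j, -, hj, hadj⟩ := hv
    refine hind (φ j) (mem_insert_of_mem ?_) v (mem_insert_self _ _) (by simpa using hadj)
    simpa [mem_acceptedSet] using hj

theorem onlineIndepNum_le_card : onlineIndepNum H ≤ Fintype.card V :=
  csSup_le' fun _ ⟨_, hA⟩ => (hA (Fintype.equivFin V).symm).2.trans (card_le_univ _)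

end Online

theorem isFreckle_of_card_le_two_mul_numIsolated [Fintype V] [DecidableEq V] (G : SimpleGraph V)
    (h : Fintype.card V ≤ 2 * numIsolated G) : IsFreckle G := by
  classical
  have hiso : Fintype.card {v // IsIsolated G v} = numIsolated G := by
    rw [numIsolated, Fintype.card_subtype]
  have hsplit := Fintype.card_subtype_compl (IsIsolated G)
  unfold IsFreckle
  have := onlineIndepNum_le_card (inducedNonIsolated G)
  omega

section AddIsolated

variable {G : SimpleGraph V} {k : ℕ}

@[simp]
theorem addIsolated_adj_inl_inl {u v : V} :
    (addIsolated G k).Adj (.inl u) (.inl v) ↔ G.Adj u v :=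
  ⟨fun ⟨_, _, h, hu, hv⟩ => Sum.inl_injective hu ▸ Sum.inl_injective hv ▸ h,
    fun h => ⟨u, v, h, rfl, rfl⟩⟩

theorem isIsolated_addIsolated_inr (j : Fin k) : IsIsolated (addIsolated G k) (.inr j) :=
  fun _ ⟨_, _, _, h, _⟩ => Sum.inr_ne_inl h

theorem le_numIsolated_addIsolated [Fintype V] : k ≤ numIsolated (addIsolated G k) := by
  classical
  calc k = #(univ.map (.inr : Fin k ↪ V ⊕ Fin k)) := by simp
    _ ≤ numIsolated (addIsolated G k) := by
      unfold numIsolated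
      convert card_le_card fun a ha => ?_
      obtain ⟨j, -, rfl⟩ := mem_map.mp ha
      simpa using isIsolated_addIsolated_inr j

variable [DecidableEq V]

theorem IsMaxIndep.isMaxIndep_toLeft {M : Finset (V ⊕ Fin k)}
    (hM : IsMaxIndep (addIsolated G k) M) : IsMaxIndep G M.toLeft := by
  refine ⟨fun u hu v hv huv => hM.1 _ (mem_toLeft.mp hu) _ (mem_toLeft.mp hv) (by simpa), ?_⟩
  intro v hv hind
  refine hM.2 (.inl v) (mt mem_toLeft.mpr hv) ?_
  rintro _ ha _ hb ⟨u, w, huw, rfl, rfl⟩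
  exact hind u (by simpa using ha) w (by simpa using hb) huw

theorem card_le_of_isMaxIndep_addIsolated [Fintype V] {M : Finset (V ⊕ Fin k)}
    (hM : IsMaxIndep (addIsolated G k) M) : k + indepDomNum G ≤ #M := by
  have hright : M.toRight = univ :=
    eq_univ_of_forall fun j => mem_toRight.mpr (hM.mem_of_isIsolated (isIsolated_addIsolated_inr j))
  rw [← card_toLeft_add_card_toRight, hright, card_univ, Fintype.card_fin]
  have := indepDomNum_le_card hM.isMaxIndep_toLeft
  omega

end AddIsolated

theorem exists_equiv_comp_eq {α β γ : Type*} [Fintype α] [Fintype β] [DecidableEq γ]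
    {f : α → γ} {g : β → γ} (h : ∀ c, #{a | f a = c} = #{b | g b = c}) :
    ∃ e : α ≃ β, ∀ a, g (e a) = f a :=
  ⟨Equiv.ofFiberEquiv fun c => Fintype.equivOfCardEq <| by
    simpa only [Fintype.card_subtype] using h c, Equiv.ofFiberEquiv_map _⟩

theorem exists_subset_card_eq_and_comparable {α : Type*} {T U : Finset α} (hTU : T ⊆ U) {n : ℕ}
    (hn : n ≤ #U) : ∃ P ⊆ U, #P = n ∧ (P ⊆ T ∨ T ⊆ P) := by
  rcases le_total n #T with h | h
  · obtain ⟨P, hPT, hP⟩ := exists_subset_card_eq h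
    exact ⟨P, hPT.trans hTU, hP, .inl hPT⟩
  · obtain ⟨P, hTP, hPU, hP⟩ := exists_subsuperset_card_eq hTU h hn
    exact ⟨P, hPU, hP, .inr hTP⟩

theorem exists_order_addIsolated [Fintype V] [DecidableEq V] (s : Finset V) (k : ℕ)
    (P : Finset (Fin (Fintype.card (V ⊕ Fin k)))) (hP : ∀ t ∈ P, t.val < k + #s)
    (hPcard : #P = #s) :
    ∃ φ : Fin (Fintype.card (V ⊕ Fin k)) ≃ V ⊕ Fin k,
      (∀ u ∈ s, φ.symm (.inl u) ∈ P) ∧ ∀ t u, φ t = .inl u → t.val < k + #s → u ∈ s := by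
  set L := k + #s
  set pre : Finset (Fin (Fintype.card (V ⊕ Fin k))) := {t | t.val < L}
  -- positions in `P` receive `s`, the other positions before `L` the isolated vertices
  let slot : Fin (Fintype.card (V ⊕ Fin k)) → Fin 3 :=
    fun t => if t ∈ P then 0 else if t.val < L then 1 else 2
  let kind : V ⊕ Fin k → Fin 3 := Sum.elim (fun u => if u ∈ s then 0 else 2) fun _ => 1
  have hslot0 : ∀ t, slot t = 0 ↔ t ∈ P := by
    intro t; simp only [slot]; split_ifs <;> simp_all
  have hslot1 : ∀ t, slot t = 1 ↔ t.val < L ∧ t ∉ P := by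
    intro t; simp only [slot]; split_ifs <;> simp_all
  have hslot2 : ∀ t, slot t = 2 ↔ ¬ t.val < L := by
    intro t; simp only [slot]; split_ifs <;> simp_all
  have hkind0 : ({a | kind a = 0} : Finset _) = s.disjSum ∅ := by
    ext (u | j) <;> simp [kind]
  have hkind1 : ({a | kind a = 1} : Finset _) = (∅ : Finset V).disjSum univ := by
    ext (u | j) <;> simp [kind]; split_ifs <;> simp
  have hkind2 : ({a | kind a = 2} : Finset _) = sᶜ.disjSum ∅ := by
    ext (u | j) <;> simp [kind]
  have hsV := s.card_le_univ
  have hL : L ≤ Fintype.card (V ⊕ Fin k) := by rw [Fintype.card_sum, Fintype.card_fin]; omega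
  obtain ⟨φ, hφ⟩ := exists_equiv_comp_eq (f := slot) (g := kind) <| by
    intro c
    obtain rfl | rfl | rfl : c = 0 ∨ c = 1 ∨ c = 2 := by revert c; decide
    · simp only [hslot0, hkind0, filter_mem_eq_inter, univ_inter, card_disjSum, hPcard,
        card_empty, add_zero]
    · have hPL : P ⊆ pre := fun t ht => by simpa [pre] using hP t ht
      rw [show ({t | slot t = 1} : Finset _) = pre \ P by ext; simp [pre, hslot1], hkind1,
        card_sdiff_of_subset hPL, Fin.card_filter_val_lt, min_eq_right hL, card_disjSum, hPcard]
      simp [L]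
    · rw [show ({t | slot t = 2} : Finset _) = preᶜ by ext; simp [pre, hslot2], hkind2,
        card_compl, Fin.card_filter_val_lt, min_eq_right hL, card_disjSum, card_compl]
      simp [L]
      omega
  refine ⟨φ, fun u hu => ?_, fun t u htu ht => ?_⟩
  · rw [← hslot0, ← hφ, Equiv.apply_symm_apply]
    simp [kind, hu]
  · by_contra hu
    have := hφ t
    rw [htu] at this
    simp [kind, hu] at this
    exact (hslot2 t).1 this.symm ht

theorem exists_order_card_acceptedSet_le [Fintype V] [DecidableEq V] (G : SimpleGraph V) (k : ℕ)
    (A : OnlineAlg) :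
    ∃ φ, IsIndep (addIsolated G k) (acceptedSet A (addIsolated G k) φ) →
      #(acceptedSet A (addIsolated G k) φ) ≤ max (k + indepDomNum G) (Fintype.card V) := by
  obtain ⟨s, hs, hscard⟩ := exists_isMaxIndep_card_eq_indepDomNum G
  have hN : Fintype.card (V ⊕ Fin k) = Fintype.card V + k := by simp
  have hsV := s.card_le_univ
  set L := k + #s
  set pre : Finset (Fin (Fintype.card (V ⊕ Fin k))) := {t | t.val < L}
  set T : Finset (Fin (Fintype.card (V ⊕ Fin k))) := {t | t.val < L ∧ A t (fun _ _ => false)}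
  have hTpre : T ⊆ pre := fun t ht => by simp only [T, pre, mem_filter] at ht ⊢; exact ⟨ht.1, ht.2.1⟩
  have hpre : #pre = L := by
    rw [Fin.card_filter_val_lt, min_eq_right]
    omega
  obtain ⟨P, hPpre, hPcard, hPT⟩ := exists_subset_card_eq_and_comparable hTpre (n := #s) (by omega)
  obtain ⟨φ, hφs, hφpre⟩ :=
    exists_order_addIsolated s k P (fun t ht => by simpa [pre] using hPpre ht) hPcard
  refine ⟨φ, fun hind => ?_⟩
  set S := acceptedSet A (addIsolated G k) φ
  have hprefix : ∀ t, t.val < L → (accepts A (addIsolated G k) φ t = true ↔ t ∈ T) := by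
    intro t ht
    rw [accepts_eq_of_isIndep_prefix A _ φ t]
    · simp [T, ht]
    rintro a b ha hb ⟨u, v, huv, hau, hbv⟩
    exact hs.1 u (hφpre a u hau (by omega)) v (hφpre b v hbv (by omega)) huv
  rcases hPT with hPT | hTP
  · -- all of `s` is accepted, hence no other vertex of `G`
    have hsub : S ⊆ s.disjSum univ := by
      rintro (v | j) hv
      · by_contra hvs
        obtain ⟨u, hus, huv⟩ := hs.exists_adj (by simpa using hvs)
        have hu : .inl u ∈ S := by
          rw [mem_acceptedSet, hprefix _ (by simpa [pre] using hPpre (hφs u hus))]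
          exact hPT (hφs u hus)
        exact hind _ hu _ hv (by simpa using huv)
      · simp
    calc #S ≤ #s + k := by simpa using card_le_card hsub
      _ ≤ _ := by omega
  · -- fewer than `#s` of the first `L` requests are accepted
    have hsub : S ⊆ (T ∪ preᶜ).map φ.toEmbedding := by
      intro v hv
      refine mem_map_equiv.mpr ?_
      by_cases ht : (φ.symm v).val < L
      · exact mem_union_left _ ((hprefix _ ht).mp ((mem_acceptedSet ..).mp hv))
      · exact mem_union_right _ (by simpa [pre] using ht)
    calc #S ≤ #T + #preᶜ := (card_le_card hsub).trans (by simpa using card_union_le _ _)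
      _ ≤ Fintype.card V := by
        rw [card_compl, hpre, Fintype.card_fin]
        have := card_le_card hTP
        omega
      _ ≤ _ := le_max_right _ _

theorem onlineIndepNum_addIsolated [Fintype V] [DecidableEq V] (G : SimpleGraph V) (k : ℕ)
    (h : Fintype.card V ≤ k + indepDomNum G) :
    onlineIndepNum (addIsolated G k) = k + indepDomNum G := by
  refine IsGreatest.csSup_eq ⟨⟨gisAlg, fun φ => ?_⟩, fun m ⟨A, hA⟩ => ?_⟩
  · have hmax := isMaxIndep_acceptedSet_gisAlg (addIsolated G k) φ
    exact ⟨hmax.1, card_le_of_isMaxIndep_addIsolated hmax⟩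
  · obtain ⟨φ, hφ⟩ := exists_order_card_acceptedSet_le G k A
    exact (hA φ).2.trans ((hφ (hA φ).1).trans (max_le le_rfl h))

/-- for a graph `G` on `n` vertices, the graph `G̃` obtained by adding `n`
new isolated vertices is a Freckle Graph, and its online independence number is
`n + i(G)`, where `i(G)` is the minimum size of an inclusion-maximal independent set
of `G`. -/
theorem statement18 {V : Type} [Fintype V] [DecidableEq V] (G : SimpleGraph V) :
    IsFreckle (addIsolated G (Fintype.card V)) ∧
      onlineIndepNum (addIsolated G (Fintype.card V)) =
        Fintype.card V + indepDomNum G := by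
  refine ⟨isFreckle_of_card_le_two_mul_numIsolated _ ?_,
    onlineIndepNum_addIsolated G _ (Nat.le_add_right _ _)⟩
  have := le_numIsolated_addIsolated (G := G) (k := Fintype.card V)
  simp only [Fintype.card_sum, Fintype.card_fin]
  omega

end OnlinePaper
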